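/- arXiv:1506.08091 — 4 statements merged into one kernel-verified Lean document; each statement's English description precedes it below -/
import Mathlib

section
/- Let E, Z be Banach spaces, K ⊆ Z a closed convex cone, X ⊆ E a compact convex set, f : X → ℝ convex and lower semicontinuous, and g : X → Z K-convex and continuous. Then the feasible set A := { z ∈ Z : ∃ x ∈ X, g(x) ⪯_K z } is closed, A equals the effective domain of the perturbation function v(z) := inf{ f(x) : x ∈ X, g(x) ⪯_K z }, and v is lower semicontinuous on Z. -/
/-!
Writing `z - g x ∈ K` as `z ∈ g x + K`, the feasible set is `g '' X + K`: a compact set plus a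
closed one in a topological group, hence closed. The same holds with `X` replaced by a sublevel
set `{x ∈ X | f x ≤ r}`, which is compact because `f` is lower semicontinuous on the compact `X`.
Since `v ≤ r` on the feasible set of that sublevel set and `v < r` forces membership in it,
`{z | y < v z}` is the union over reals `r > y` of the complements of these closed sets,
so it is open.
-/

open Set Pointwise

theorem IsCompact.sep_le_of_lowerSemicontinuousOn {α γ : Type*} [TopologicalSpace α]
    [LinearOrder γ] {X : Set α} (hX : IsCompact X) {f : α → γ}
    (hf : LowerSemicontinuousOn f X) (r : γ) : IsCompact {x ∈ X | f x ≤ r} := by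
  obtain ⟨V, hV, hXV⟩ := lowerSemicontinuousOn_iff_preimage_Iic.1 hf r
  change IsCompact (X ∩ f ⁻¹' Iic r)
  rw [hXV]
  exact hX.inter_right hV

section Perturbation

variable {E Z : Type*} [AddCommGroup Z]

def feasibleSet (K : Set Z) (g : E → Z) (S : Set E) : Set Z :=
  {z | ∃ x ∈ S, z - g x ∈ K}

noncomputable def perturbationFunction (K : Set Z) (X : Set E) (f : E → ℝ) (g : E → Z)
    (z : Z) : EReal :=
  sInf ((fun x => (f x : EReal)) '' {x | x ∈ X ∧ z - g x ∈ K})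

variable {K : Set Z} {X : Set E} {f : E → ℝ} {g : E → Z} {z : Z}

theorem feasibleSet_eq_image_add (K : Set Z) (g : E → Z) (S : Set E) :
    feasibleSet K g S = g '' S + K := by
  ext z
  constructor
  · rintro ⟨x, hxS, hxK⟩
    exact ⟨g x, mem_image_of_mem g hxS, z - g x, hxK, add_sub_cancel _ _⟩
  · rintro ⟨_, ⟨x, hxS, rfl⟩, k, hk, rfl⟩
    exact ⟨x, hxS, by rwa [add_sub_cancel_left]⟩

theorem isClosed_feasibleSet [TopologicalSpace E] [TopologicalSpace Z]
    [IsTopologicalAddGroup Z] (hK : IsClosed K) {S : Set E} (hS : IsCompact S)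
    (hg : ContinuousOn g S) : IsClosed (feasibleSet K g S) := by
  rw [feasibleSet_eq_image_add]
  exact hK.add_left_of_isCompact (hS.image_of_continuousOn hg)

theorem perturbationFunction_le (hx : x ∈ X) (hxz : z - g x ∈ K) :
    perturbationFunction K X f g z ≤ f x :=
  sInf_le ⟨x, ⟨hx, hxz⟩, rfl⟩

theorem perturbationFunction_lt_top_iff :
    perturbationFunction K X f g z < ⊤ ↔ z ∈ feasibleSet K g X := by
  constructor
  · intro h
    by_contra hz
    have hempty : {x | x ∈ X ∧ z - g x ∈ K} = ∅ :=
      eq_empty_of_forall_notMem fun x hx => hz ⟨x, hx⟩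
    simp [perturbationFunction, hempty] at h
  · rintro ⟨x, hx, hxz⟩
    exact (perturbationFunction_le hx hxz).trans_lt (EReal.coe_lt_top _)

theorem mem_feasibleSet_sublevel_of_perturbationFunction_lt {r : ℝ}
    (h : perturbationFunction K X f g z < r) : z ∈ feasibleSet K g {x ∈ X | f x ≤ r} := by
  obtain ⟨_, ⟨x, ⟨hx, hxz⟩, rfl⟩, hfx⟩ := sInf_lt_iff.1 h
  exact ⟨x, ⟨hx, (EReal.coe_lt_coe_iff.1 hfx).le⟩, hxz⟩

theorem perturbationFunction_le_of_mem_feasibleSet_sublevel {r : ℝ}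
    (h : z ∈ feasibleSet K g {x ∈ X | f x ≤ r}) : perturbationFunction K X f g z ≤ r := by
  obtain ⟨x, ⟨hx, hfx⟩, hxz⟩ := h
  exact (perturbationFunction_le hx hxz).trans (EReal.coe_le_coe_iff.2 hfx)

theorem lowerSemicontinuous_perturbationFunction [TopologicalSpace E] [TopologicalSpace Z]
    [IsTopologicalAddGroup Z] (hK : IsClosed K) (hX : IsCompact X)
    (hf : LowerSemicontinuousOn f X) (hg : ContinuousOn g X) :
    LowerSemicontinuous (perturbationFunction K X f g) := by
  refine lowerSemicontinuous_iff_isOpen_preimage.2 fun y => ?_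
  have hsuper : perturbationFunction K X f g ⁻¹' Ioi y =
      ⋃ (r : ℝ) (_ : y < r), (feasibleSet K g {x ∈ X | f x ≤ r})ᶜ := by
    ext z
    simp only [mem_preimage, mem_Ioi, mem_iUnion, mem_compl_iff, exists_prop]
    constructor
    · intro hz
      obtain ⟨r, hyr, hrz⟩ := EReal.exists_between_coe_real hz
      exact ⟨r, hyr, fun hmem =>
        (perturbationFunction_le_of_mem_feasibleSet_sublevel hmem).not_gt hrz⟩
    · rintro ⟨r, hyr, hz⟩
      exact hyr.trans_le (not_lt.1 fun h =>
        hz (mem_feasibleSet_sublevel_of_perturbationFunction_lt h))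
  rw [hsuper]
  exact isOpen_biUnion fun r _ => (isClosed_feasibleSet hK
    (hX.sep_le_of_lowerSemicontinuousOn hf r) (hg.mono (sep_subset _ _))).isOpen_compl

end Perturbation

theorem stmt_1_general
    {E Z : Type*} [NormedAddCommGroup E]
    [NormedAddCommGroup Z]
    (K : Set Z) (hKclosed : IsClosed K)
    (X : Set E) (hXcomp : IsCompact X)
    (f : E → ℝ) (hflsc : LowerSemicontinuousOn f X)
    (g : E → Z) (hgcont : ContinuousOn g X)
    (v : Z → EReal)
    (hv : ∀ z, v z = sInf ((fun x => (f x : EReal)) '' {x | x ∈ X ∧ z - g x ∈ K}))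
    (A : Set Z) (hA : A = {z | ∃ x ∈ X, z - g x ∈ K}) :
    IsClosed A ∧ A = {z | v z < ⊤} ∧ LowerSemicontinuous v := by
  obtain rfl : v = perturbationFunction K X f g := funext hv
  obtain rfl : A = feasibleSet K g X := hA
  exact ⟨isClosed_feasibleSet hKclosed hXcomp hgcont,
    (Set.ext fun _ => perturbationFunction_lt_top_iff).symm,
    lowerSemicontinuous_perturbationFunction hKclosed hXcomp hflsc hgcont⟩

/-- with `X` compact, `f` lsc and `g` continuous, the feasible set
`A` is closed, equals the effective domain of `v`, and `v` is lower semicontinuous. -/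
theorem stmt_1
    {E Z : Type*} [NormedAddCommGroup E] [NormedSpace ℝ E] [CompleteSpace E]
    [NormedAddCommGroup Z] [NormedSpace ℝ Z] [CompleteSpace Z]
    (K : Set Z) (hKclosed : IsClosed K) (hKconv : Convex ℝ K)
    (hKcone : ∀ c : ℝ, 0 ≤ c → ∀ z ∈ K, c • z ∈ K)
    (X : Set E) (hX : Convex ℝ X) (hXcomp : IsCompact X)
    (f : E → ℝ) (hf : ConvexOn ℝ X f) (hflsc : LowerSemicontinuousOn f X)
    (g : E → Z) (hgcont : ContinuousOn g X)
    (hg : ∀ x₁ ∈ X, ∀ x₂ ∈ X, ∀ t ∈ Set.Icc (0:ℝ) 1,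
      t • g x₁ + (1 - t) • g x₂ - g (t • x₁ + (1 - t) • x₂) ∈ K)
    (v : Z → EReal)
    (hv : ∀ z, v z = sInf ((fun x => (f x : EReal)) '' {x | x ∈ X ∧ z - g x ∈ K}))
    (A : Set Z) (hA : A = {z | ∃ x ∈ X, z - g x ∈ K}) :
    IsClosed A ∧ A = {z | v z < ⊤} ∧ LowerSemicontinuous v :=
  stmt_1_general K hKclosed X hXcomp f hflsc g hgcont v hv A hA
end

section
/- Let E, Z be Banach spaces, K ⊆ Z a closed convex cone with nonempty interior, X ⊆ E a compact convex set, f : X → ℝ convex and lower semicontinuous, and g : X → Z K-convex and continuous. Suppose the Slater condition holds: there exists x̂ ∈ X with -g(x̂) ∈ int(K). Then the perturbation function v(z) := inf{ f(x) : x ∈ X, g(x) ⪯_K z } is continuous at 0 ∈ Z. -/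
/-!
The real-valued value function `w z = inf {f x | x ∈ X, g x ⪯_K z}` is convex wherever the
constraint is feasible: averaging near-optimal points for `z₁` and `z₂` gives a feasible point for
the averaged right-hand side, by K-convexity of `g`. The Slater point stays feasible for every `z`
in a ball around `0`, so `w` is bounded above there by `f x̂`, and it is bounded below by the
minimum of the lower semicontinuous `f` on the compact `X`. A convex function bounded above on an
open set is continuous there, and `v` is the coercion of `w` to `EReal` on that ball.
-/

open Set Filter Topology Metric

lemma add_mem_of_convex_of_smul_mem {Z : Type*} [AddCommGroup Z] [Module ℝ Z] {K : Set Z}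
    (hKconv : Convex ℝ K) (hKcone : ∀ c : ℝ, 0 ≤ c → ∀ z ∈ K, c • z ∈ K)
    {a b : Z} (ha : a ∈ K) (hb : b ∈ K) : a + b ∈ K := by
  have hmid : (1 / 2 : ℝ) • a + (1 / 2 : ℝ) • b ∈ K :=
    hKconv ha hb (by norm_num) (by norm_num) (by norm_num)
  have hsum : (2 : ℝ) • ((1 / 2 : ℝ) • a + (1 / 2 : ℝ) • b) = a + b := by
    rw [smul_add, smul_smul, smul_smul]; norm_num
  simpa only [hsum] using hKcone 2 (by norm_num) _ hmid

lemma Real.toEReal_sInf {s : Set ℝ} (hne : s.Nonempty) (hbdd : BddBelow s) :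
    ((sInf s : ℝ) : EReal) = sInf (Real.toEReal '' s) :=
  Monotone.map_csInf_of_continuousAt continuous_coe_real_ereal.continuousAt
    EReal.coe_strictMono.monotone hne hbdd

lemma ConvexOn.continuousAt_of_le {Z : Type*} [NormedAddCommGroup Z] [NormedSpace ℝ Z]
    {C : Set Z} {w : Z → ℝ} {z₀ : Z} {M : ℝ} (hw : ConvexOn ℝ C w) (hC : IsOpen C)
    (hz₀ : z₀ ∈ C) (hM : ∀ z ∈ C, w z ≤ M) : ContinuousAt w z₀ := by
  have hbdd : (𝓝 z₀).IsBoundedUnder (· ≤ ·) w :=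
    ⟨M, eventually_map.2 (eventually_of_mem (hC.mem_nhds hz₀) hM)⟩
  have hne : C.Nonempty := ⟨z₀, hz₀⟩
  have hcont : ContinuousOn w C := by
    have htfae := (hw.continuousOn_tfae hC hne).out 3 1
    exact htfae.1 ⟨z₀, hz₀, hbdd⟩
  exact hcont.continuousAt (hC.mem_nhds hz₀)

section PerturbationValue

variable {E Z : Type*} [AddCommGroup E] [Module ℝ E] [AddCommGroup Z] [Module ℝ Z]
  {K : Set Z} {X : Set E} {f : E → ℝ} {g : E → Z}

/-- The value of `inf {f x | x ∈ X, g x ⪯_K z}` as a real number; this is the junk value `0` when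
the constraint is infeasible or `f` is unbounded below on the feasible set. -/
noncomputable def perturbationValue (X : Set E) (f : E → ℝ) (g : E → Z) (K : Set Z) (z : Z) : ℝ :=
  sInf (f '' {x | x ∈ X ∧ z - g x ∈ K})

lemma sub_mem_of_convexComb_feasible (hKconv : Convex ℝ K)
    (hKcone : ∀ c : ℝ, 0 ≤ c → ∀ z ∈ K, c • z ∈ K)
    (hg : ∀ x₁ ∈ X, ∀ x₂ ∈ X, ∀ t ∈ Set.Icc (0:ℝ) 1,
      t • g x₁ + (1 - t) • g x₂ - g (t • x₁ + (1 - t) • x₂) ∈ K)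
    {x₁ x₂ : E} {z₁ z₂ : Z} (hx₁ : x₁ ∈ X) (hx₂ : x₂ ∈ X) (h₁ : z₁ - g x₁ ∈ K)
    (h₂ : z₂ - g x₂ ∈ K) {a b : ℝ} (ha : 0 ≤ a) (hb : 0 ≤ b) (hab : a + b = 1) :
    a • z₁ + b • z₂ - g (a • x₁ + b • x₂) ∈ K := by
  obtain rfl : b = 1 - a := by linarith
  have hgK := hg x₁ hx₁ x₂ hx₂ a ⟨ha, by linarith⟩
  have hsum := add_mem_of_convex_of_smul_mem hKconv hKcone
    (add_mem_of_convex_of_smul_mem hKconv hKcone (hKcone a ha _ h₁) (hKcone _ hb _ h₂)) hgK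
  convert hsum using 1
  simp only [smul_sub]
  abel

lemma convexOn_perturbationValue (hKconv : Convex ℝ K)
    (hKcone : ∀ c : ℝ, 0 ≤ c → ∀ z ∈ K, c • z ∈ K)
    (hg : ∀ x₁ ∈ X, ∀ x₂ ∈ X, ∀ t ∈ Set.Icc (0:ℝ) 1,
      t • g x₁ + (1 - t) • g x₂ - g (t • x₁ + (1 - t) • x₂) ∈ K)
    (hf : ConvexOn ℝ X f) (hbdd : BddBelow (f '' X)) {S : Set Z} (hS : Convex ℝ S)
    (hfeas : ∀ z ∈ S, {x | x ∈ X ∧ z - g x ∈ K}.Nonempty) : ConvexOn ℝ S (perturbationValue X f g K) := by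
  have hbddF : ∀ z, BddBelow (f '' {x | x ∈ X ∧ z - g x ∈ K}) :=
    fun z => hbdd.mono (image_mono fun _ hx => hx.1)
  refine ⟨hS, fun z₁ hz₁ z₂ hz₂ a b ha hb hab => le_of_forall_pos_le_add fun ε hε => ?_⟩
  obtain ⟨_, ⟨x₁, hx₁, rfl⟩, hlt₁⟩ := Real.lt_sInf_add_pos ((hfeas z₁ hz₁).image f) hε
  obtain ⟨_, ⟨x₂, hx₂, rfl⟩, hlt₂⟩ := Real.lt_sInf_add_pos ((hfeas z₂ hz₂).image f) hε
  have hfeas_comb : a • x₁ + b • x₂ ∈ {x | x ∈ X ∧ a • z₁ + b • z₂ - g x ∈ K} :=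
    ⟨hf.1 hx₁.1 hx₂.1 ha hb hab,
      sub_mem_of_convexComb_feasible hKconv hKcone hg hx₁.1 hx₂.1 hx₁.2 hx₂.2 ha hb hab⟩
  calc perturbationValue X f g K (a • z₁ + b • z₂)
      ≤ f (a • x₁ + b • x₂) := csInf_le (hbddF _) ⟨_, hfeas_comb, rfl⟩
    _ ≤ a * f x₁ + b * f x₂ := hf.2 hx₁.1 hx₂.1 ha hb hab
    _ ≤ a * (perturbationValue X f g K z₁ + ε) + b * (perturbationValue X f g K z₂ + ε) := by
      gcongr
      exacts [hlt₁.le, hlt₂.le]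
    _ = a * perturbationValue X f g K z₁ + b * perturbationValue X f g K z₂ + ε := by
      linear_combination ε * hab

end PerturbationValue

theorem stmt_2_general
    {E Z : Type*} [NormedAddCommGroup E] [NormedSpace ℝ E]
    [NormedAddCommGroup Z] [NormedSpace ℝ Z]
    (K : Set Z) (hKconv : Convex ℝ K)
    (hKcone : ∀ c : ℝ, 0 ≤ c → ∀ z ∈ K, c • z ∈ K)
    (X : Set E) (hXcomp : IsCompact X)
    (f : E → ℝ) (hf : ConvexOn ℝ X f) (hflsc : LowerSemicontinuousOn f X)
    (g : E → Z)
    (hg : ∀ x₁ ∈ X, ∀ x₂ ∈ X, ∀ t ∈ Set.Icc (0:ℝ) 1,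
      t • g x₁ + (1 - t) • g x₂ - g (t • x₁ + (1 - t) • x₂) ∈ K)
    (hSlater : ∃ xh ∈ X, -g xh ∈ interior K)
    (v : Z → EReal)
    (hv : ∀ z, v z = sInf ((fun x => (f x : EReal)) '' {x | x ∈ X ∧ z - g x ∈ K})) :
    ContinuousAt v 0 := by
  obtain ⟨xh, hxhX, hxhK⟩ := hSlater
  obtain ⟨δ, hδ, hball⟩ := Metric.isOpen_iff.1 isOpen_interior (-g xh) hxhK
  have hfeas : ∀ z ∈ ball (0 : Z) δ, xh ∈ {x | x ∈ X ∧ z - g x ∈ K} := fun z hz =>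
    ⟨hxhX, interior_subset (hball (by simpa [sub_eq_add_neg, dist_eq_norm] using hz))⟩
  have hbdd := hflsc.bddBelow_of_isCompact hXcomp
  have hbddF : ∀ z, BddBelow (f '' {x | x ∈ X ∧ z - g x ∈ K}) :=
    fun z => hbdd.mono (image_mono fun _ hx => hx.1)
  have hconv := convexOn_perturbationValue hKconv hKcone hg hf hbdd (convex_ball 0 δ)
    fun z hz => ⟨xh, hfeas z hz⟩
  have hcont : ContinuousAt (perturbationValue X f g K) 0 :=
    hconv.continuousAt_of_le isOpen_ball (mem_ball_self hδ)
      fun z hz => csInf_le (hbddF z) ⟨xh, hfeas z hz, rfl⟩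
  refine (continuous_coe_real_ereal.continuousAt.comp hcont).congr ?_
  filter_upwards [ball_mem_nhds (0 : Z) hδ] with z hz
  rw [hv, Function.comp_apply, perturbationValue,
    Real.toEReal_sInf (Set.Nonempty.image f ⟨xh, hfeas z hz⟩) (hbddF z), image_image]

/-- under the Slater condition, the perturbation function `v` is
continuous at `0`. -/
theorem stmt_2
    {E Z : Type*} [NormedAddCommGroup E] [NormedSpace ℝ E] [CompleteSpace E]
    [NormedAddCommGroup Z] [NormedSpace ℝ Z] [CompleteSpace Z]
    (K : Set Z) (hKclosed : IsClosed K) (hKconv : Convex ℝ K)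
    (hKcone : ∀ c : ℝ, 0 ≤ c → ∀ z ∈ K, c • z ∈ K)
    (hKint : (interior K).Nonempty)
    (X : Set E) (hX : Convex ℝ X) (hXcomp : IsCompact X)
    (f : E → ℝ) (hf : ConvexOn ℝ X f) (hflsc : LowerSemicontinuousOn f X)
    (g : E → Z) (hgcont : ContinuousOn g X)
    (hg : ∀ x₁ ∈ X, ∀ x₂ ∈ X, ∀ t ∈ Set.Icc (0:ℝ) 1,
      t • g x₁ + (1 - t) • g x₂ - g (t • x₁ + (1 - t) • x₂) ∈ K)
    (hSlater : ∃ xh ∈ X, -g xh ∈ interior K)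
    (v : Z → EReal)
    (hv : ∀ z, v z = sInf ((fun x => (f x : EReal)) '' {x | x ∈ X ∧ z - g x ∈ K})) :
    ContinuousAt v 0 :=
  stmt_2_general K hKconv hKcone X hXcomp f hf hflsc g hg hSlater v hv
end

section
/- Let Z be a Banach space and v : Z → ℝ ∪ {+∞} a proper lower semicontinuous convex function, and let z̄ ∈ dom(v). Then ∂v(z̄) ≠ ∅ if and only if there exists M ∈ (0, +∞) such that (v(z̄) - v(z)) / ‖z - z̄‖ ≤ M for all z ∈ Z with z ≠ z̄. -/
/-- for a proper lsc convex function `v` on a Banach space and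
`z̄ ∈ dom v`, `∂v(z̄) ≠ ∅` iff the decrease rate of `v` at `z̄` is bounded. -/
theorem stmt_6
    {Z : Type*} [NormedAddCommGroup Z] [NormedSpace ℝ Z] [CompleteSpace Z]
    (v : Z → EReal)
    (hproper₁ : ∀ z, v z ≠ ⊥) (hproper₂ : ∃ z, v z ≠ ⊤)
    (hconv : ∀ z₁ z₂ : Z, ∀ t ∈ Set.Icc (0:ℝ) 1, ∀ a b : ℝ,
      v z₁ ≤ (a : EReal) → v z₂ ≤ (b : EReal) →
      v (t • z₁ + (1 - t) • z₂) ≤ ((t * a + (1 - t) * b : ℝ) : EReal))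
    (hlsc : LowerSemicontinuous v)
    (zb : Z) (r : ℝ) (hzb : v zb = (r : EReal)) :
    (∃ s : Z →L[ℝ] ℝ, ∀ z : Z, ((s (z - zb) : ℝ) : EReal) + (r : EReal) ≤ v z)
    ↔
    (∃ M : ℝ, 0 < M ∧ ∀ z : Z, z ≠ zb →
      (r : EReal) ≤ v z + ((M * ‖z - zb‖ : ℝ) : EReal)) := by
  constructor
  · rintro ⟨s, hs⟩
    refine ⟨‖s‖ + 1, by positivity, fun z hz => ?_⟩
    set a := s (z - zb) with ha
    have h1 : -(‖s‖ * ‖z - zb‖) ≤ a := by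
      have h := s.le_opNorm (z - zb)
      rw [Real.norm_eq_abs] at h
      linarith [(abs_le.mp h).1]
    have hr : r ≤ (a + r) + (‖s‖ + 1) * ‖z - zb‖ := by
      nlinarith [norm_nonneg (z - zb)]
    calc (r : EReal) ≤ (((a + r) + (‖s‖ + 1) * ‖z - zb‖ : ℝ) : EReal) :=
          EReal.coe_le_coe_iff.mpr hr
      _ = ((a + r : ℝ) : EReal) + (((‖s‖ + 1) * ‖z - zb‖ : ℝ) : EReal) := EReal.coe_add _ _
      _ = (((a : ℝ) : EReal) + (r : EReal)) + (((‖s‖ + 1) * ‖z - zb‖ : ℝ) : EReal) := by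
          rw [EReal.coe_add]
      _ ≤ v z + (((‖s‖ + 1) * ‖z - zb‖ : ℝ) : EReal) := add_le_add_left (hs z) _
  · rintro ⟨M, hM, hdec⟩
    -- real-valued lower bound on decrease
    have key : ∀ z : Z, ∀ a : ℝ, v z ≤ (a : EReal) → r ≤ a + M * ‖z - zb‖ := by
      intro z a ha
      by_cases hz : z = zb
      · rw [hz] at ha ⊢
        have h2 : r ≤ a := EReal.coe_le_coe_iff.mp (hzb ▸ ha)
        nlinarith [norm_nonneg (zb - zb)]
      · have h1 := hdec z hz
        have h2 : v z + ((M * ‖z - zb‖ : ℝ) : EReal)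
            ≤ (a : EReal) + ((M * ‖z - zb‖ : ℝ) : EReal) := add_le_add_left ha _
        have h3 : (r : EReal) ≤ ((a + M * ‖z - zb‖ : ℝ) : EReal) := by
          rw [EReal.coe_add]; exact h1.trans h2
        exact EReal.coe_le_coe_iff.mp h3
    set S : Z → Set ℝ := fun x => {c : ℝ | ∃ y w : Z, ∃ t a : ℝ,
      y + w = x ∧ 0 < t ∧ t ≤ 1 ∧ v (zb + t • y) ≤ (a : EReal) ∧
      (a - r) / t + M * ‖w‖ ≤ c} with hSdef
    have hmemS : ∀ x, M * ‖x‖ ∈ S x := by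
      intro x
      refine ⟨0, x, 1, r, by simp, one_pos, le_refl 1, by simp [hzb], by simp⟩
    have hlbS : ∀ x, ∀ c ∈ S x, -(M * ‖x‖) ≤ c := by
      rintro x c ⟨y, w, t, a, hyw, ht0, ht1, hva, hc⟩
      have h1 : r ≤ a + M * ‖zb + t • y - zb‖ := key _ a hva
      have h2 : ‖zb + t • y - zb‖ = t * ‖y‖ := by
        simp [norm_smul, abs_of_pos ht0]
      rw [h2] at h1
      have h3 : -(M * ‖y‖) ≤ (a - r) / t := by
        rw [le_div_iff₀ ht0]; nlinarith
      have h4 : ‖y‖ ≤ ‖x‖ + ‖w‖ := by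
        have hy : y = x - w := by rw [← hyw]; abel
        rw [hy]; exact norm_sub_le _ _
      nlinarith [mul_le_mul_of_nonneg_left h4 hM.le]
    have hbdd : ∀ x, BddBelow (S x) := fun x => ⟨-(M * ‖x‖), fun c hc => hlbS x c hc⟩
    have hne : ∀ x, (S x).Nonempty := fun x => ⟨_, hmemS x⟩
    set N : Z → ℝ := fun x => sInf (S x) with hNdef
    have hN_le : ∀ x, N x ≤ M * ‖x‖ := fun x => csInf_le (hbdd x) (hmemS x)
    have hN_lb : ∀ x, -(M * ‖x‖) ≤ N x := fun x => le_csInf (hne x) (hlbS x)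
    -- shrinking the parameter via convexity
    have hshrink : ∀ y : Z, ∀ t t' a : ℝ, 0 < t' → t' ≤ t → t ≤ 1 →
        v (zb + t • y) ≤ (a : EReal) →
        v (zb + t' • y) ≤ (((t' / t) * a + (1 - t' / t) * r : ℝ) : EReal) := by
      intro y t t' a ht' htt ht1 hva
      have ht0 : 0 < t := lt_of_lt_of_le ht' htt
      have hmem : t' / t ∈ Set.Icc (0:ℝ) 1 := ⟨by positivity, (div_le_one ht0).mpr htt⟩
      have hcv := hconv (zb + t • y) zb (t' / t) hmem a r hva (le_of_eq hzb)
      have hpt : (t' / t) • (zb + t • y) + (1 - t' / t) • zb = zb + t' • y := by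
        have h : t' / t * t = t' := div_mul_cancel₀ t' (ne_of_gt ht0)
        rw [smul_add, smul_smul, h]
        module
      rw [hpt] at hcv
      exact hcv
    -- scalar multiplication on S
    have hsmulS : ∀ c : ℝ, 0 < c → ∀ x : Z, ∀ c₀ ∈ S x, c * c₀ ∈ S (c • x) := by
      rintro c hc x c₀ ⟨y, w, t, a, hyw, ht0, ht1, hva, hc₀⟩
      set t' := min 1 (t / c) with ht'def
      have ht'0 : 0 < t' := lt_min one_pos (by positivity)
      have ht'1 : t' ≤ 1 := min_le_left _ _
      have hct' : c * t' ≤ t := by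
        have := mul_le_mul_of_nonneg_left (min_le_right 1 (t / c)) hc.le
        rwa [mul_div_cancel₀ _ (ne_of_gt hc)] at this
      have hct'0 : 0 < c * t' := by positivity
      have hshr := hshrink y t (c * t') a hct'0 hct' ht1 hva
      refine ⟨c • y, c • w, t', (c * t' / t) * a + (1 - c * t' / t) * r,
        by rw [← hyw, smul_add], ht'0, ht'1, ?_, ?_⟩
      · have h : t' • (c • y) = (c * t') • y := by rw [smul_smul, mul_comm]
        rw [h]; exact hshr
      · have hnw : ‖c • w‖ = c * ‖w‖ := by
          rw [norm_smul, Real.norm_eq_abs, abs_of_pos hc]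
        rw [hnw]
        have ht0' : t ≠ 0 := ne_of_gt ht0
        have ht'0' : t' ≠ 0 := ne_of_gt ht'0
        have expand : ((c * t' / t) * a + (1 - c * t' / t) * r - r) / t' = c * ((a - r) / t) := by
          field_simp
          ring
        rw [expand]
        nlinarith [mul_le_mul_of_nonneg_left hc₀ hc.le]
    -- N is positively homogeneous
    have hN_hom : ∀ c : ℝ, 0 < c → ∀ x, N (c • x) = c * N x := by
      have hle : ∀ c' : ℝ, 0 < c' → ∀ x', N (c' • x') ≤ c' * N x' := by
        intro c' hc' x'
        have h1 : ∀ c₀ ∈ S x', N (c' • x') ≤ c' * c₀ := fun c₀ h =>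
          csInf_le (hbdd _) (hsmulS c' hc' x' c₀ h)
        have h2 : ∀ c₀ ∈ S x', N (c' • x') / c' ≤ c₀ := fun c₀ h =>
          (div_le_iff₀ hc').mpr (by rw [mul_comm]; exact h1 c₀ h)
        have h3 : N (c' • x') / c' ≤ N x' := le_csInf (hne _) h2
        have h4 := (div_le_iff₀ hc').mp h3
        linarith [h4]
      intro c hc x
      have h1 := hle c hc x
      have h2 := hle c⁻¹ (by positivity) (c • x)
      rw [smul_smul, inv_mul_cancel₀ (ne_of_gt hc), one_smul] at h2
      have h3 := mul_le_mul_of_nonneg_left h2 hc.le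
      rw [← mul_assoc, mul_inv_cancel₀ (ne_of_gt hc), one_mul] at h3
      linarith
    -- addition on S
    have haddS : ∀ x₁ x₂ : Z, ∀ c₁ ∈ S x₁, ∀ c₂ ∈ S x₂, c₁ + c₂ ∈ S (x₁ + x₂) := by
      rintro x₁ x₂ c₁ ⟨y₁, w₁, t₁, a₁, hyw₁, ht₁0, ht₁1, hva₁, hc₁⟩
        c₂ ⟨y₂, w₂, t₂, a₂, hyw₂, ht₂0, ht₂1, hva₂, hc₂⟩
      have hden : 0 < t₁ + t₂ := by linarith
      set lam := t₂ / (t₁ + t₂) with hlam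
      have hlam0 : (0:ℝ) ≤ lam := by positivity
      have hlam1 : lam ≤ 1 := by rw [hlam, div_le_one hden]; linarith
      have hcv := hconv (zb + t₁ • y₁) (zb + t₂ • y₂) lam ⟨hlam0, hlam1⟩ a₁ a₂ hva₁ hva₂
      set t := t₁ * t₂ / (t₁ + t₂) with htdef
      have ht0 : 0 < t := by positivity
      have ht1 : t ≤ 1 := by
        rw [htdef, div_le_one hden]; nlinarith
      have hpt : lam • (zb + t₁ • y₁) + (1 - lam) • (zb + t₂ • y₂) = zb + t • (y₁ + y₂) := by
        rw [hlam, htdef]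
        match_scalars <;> field_simp <;> ring
      rw [hpt] at hcv
      refine ⟨y₁ + y₂, w₁ + w₂, t, lam * a₁ + (1 - lam) * a₂,
        by rw [← hyw₁, ← hyw₂]; abel, ht0, ht1, hcv, ?_⟩
      have hslope : (lam * a₁ + (1 - lam) * a₂ - r) / t = (a₁ - r) / t₁ + (a₂ - r) / t₂ := by
        rw [hlam, htdef]
        field_simp
        ring
      rw [hslope]
      have hnn : ‖w₁ + w₂‖ ≤ ‖w₁‖ + ‖w₂‖ := norm_add_le _ _
      nlinarith [mul_le_mul_of_nonneg_left hnn hM.le]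
    -- N is subadditive
    have hN_add : ∀ x y, N (x + y) ≤ N x + N y := by
      intro x y
      have h1 : ∀ c₁ ∈ S x, ∀ c₂ ∈ S y, N (x + y) ≤ c₁ + c₂ := fun c₁ h₁ c₂ h₂ =>
        csInf_le (hbdd _) (haddS x y c₁ h₁ c₂ h₂)
      have h2 : ∀ c₂ ∈ S y, N (x + y) - c₂ ≤ N x := fun c₂ h₂ =>
        le_csInf (hne x) (fun c₁ h₁ => by linarith [h1 c₁ h₁ c₂ h₂])
      have h4 : N (x + y) - N x ≤ N y :=
        le_csInf (hne y) (fun c₂ h₂ => by linarith [h2 c₂ h₂])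
      linarith
    -- Hahn-Banach
    obtain ⟨g, -, hg⟩ := exists_extension_of_le_sublinear (⊥ : Z →ₗ.[ℝ] ℝ) N hN_hom hN_add
      (fun x => by
        have hx : (x : Z) = 0 := by
          rcases x with ⟨x, hx⟩
          exact (Submodule.mem_bot ℝ).mp hx
        have h0 : (0:ℝ) ≤ N 0 := by
          have h0' := hN_lb 0
          rw [norm_zero, mul_zero, neg_zero] at h0'
          exact h0'
        calc (⊥ : Z →ₗ.[ℝ] ℝ) x ≤ 0 := le_of_eq rfl
          _ ≤ N (x : Z) := by rw [hx]; exact h0)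
    have hgb : ∀ x, ‖g x‖ ≤ M * ‖x‖ := by
      intro x
      rw [Real.norm_eq_abs, abs_le]
      refine ⟨?_, (hg x).trans (hN_le x)⟩
      have h1 := (hg (-x)).trans (hN_le (-x))
      rw [map_neg, norm_neg] at h1
      linarith
    refine ⟨LinearMap.mkContinuous g M hgb, fun z => ?_⟩
    by_cases hz : v z = ⊤
    · rw [hz]; exact le_top
    · have hcoe : v z = ((v z).toReal : EReal) := (EReal.coe_toReal hz (hproper₁ z)).symm
      set a := (v z).toReal with hadef
      have hva : v z ≤ (a : EReal) := le_of_eq hcoe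
      have hmem : a - r ∈ S (z - zb) := by
        refine ⟨z - zb, 0, 1, a, by simp, one_pos, le_refl 1, by simpa using hva, by simp⟩
      have h1 : g (z - zb) ≤ a - r := (hg _).trans (csInf_le (hbdd _) hmem)
      have h2 : LinearMap.mkContinuous g M hgb (z - zb) + r ≤ a := by
        show g (z - zb) + r ≤ a
        linarith
      calc ((LinearMap.mkContinuous g M hgb (z - zb) : ℝ) : EReal) + (r : EReal)
          = ((LinearMap.mkContinuous g M hgb (z - zb) + r : ℝ) : EReal) := (EReal.coe_add _ _).symm
        _ ≤ (a : EReal) := EReal.coe_le_coe_iff.mpr h2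
        _ = v z := hcoe.symm
end

section
/- Let E, Z be Banach spaces, K ⊆ Z a closed convex cone, X ⊆ E convex, f : X → ℝ convex, g : X → Z K-convex. Suppose the primal problem min{ f(x) : x ∈ X, g(x) ⪯_K 0 } has an optimal solution and that the perturbation function v satisfies: v(0) is finite and there exists M > 0 with v(0) - v(z) ≤ M‖z‖ for all z ∈ Z. Then there exists an optimal Lagrange multiplier ū* ∈ K⁺ for the primal problem, i.e., some x̄ ∈ X with g(x̄) ⪯_K 0, ⟨ū*, g(x̄)⟩ = 0, and f(x̄) + ⟨ū*, g(x̄)⟩ = min_{x∈X}{ f(x) + ⟨ū*, g(x)⟩ }. -/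
/-- if the primal problem has an optimal solution, `v(0)` is finite
and `v(0) - v(z) ≤ M‖z‖` for all `z`, then an optimal Lagrange multiplier exists. -/
theorem stmt_7
    {E Z : Type*} [NormedAddCommGroup E] [NormedSpace ℝ E] [CompleteSpace E]
    [NormedAddCommGroup Z] [NormedSpace ℝ Z] [CompleteSpace Z]
    (K : Set Z) (hKclosed : IsClosed K) (hKconv : Convex ℝ K)
    (hKcone : ∀ c : ℝ, 0 ≤ c → ∀ z ∈ K, c • z ∈ K)
    (X : Set E) (hX : Convex ℝ X)
    (f : E → ℝ) (hf : ConvexOn ℝ X f)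
    (g : E → Z)
    (hg : ∀ x₁ ∈ X, ∀ x₂ ∈ X, ∀ t ∈ Set.Icc (0:ℝ) 1,
      t • g x₁ + (1 - t) • g x₂ - g (t • x₁ + (1 - t) • x₂) ∈ K)
    (hopt : ∃ xopt ∈ X, -g xopt ∈ K ∧ ∀ x ∈ X, -g x ∈ K → f xopt ≤ f x)
    (Kplus : Set (Z →L[ℝ] ℝ)) (hKplus : Kplus = {u | ∀ z ∈ K, 0 ≤ u z})
    (v : Z → EReal)
    (hv : ∀ z, v z = sInf ((fun x => (f x : EReal)) '' {x | x ∈ X ∧ z - g x ∈ K}))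
    (c : ℝ) (hv0 : v 0 = (c : EReal))
    (M : ℝ) (hM : 0 < M)
    (hrate : ∀ z : Z, v 0 ≤ v z + ((M * ‖z‖ : ℝ) : EReal)) :
    ∃ ub ∈ Kplus, ∃ xb ∈ X, -g xb ∈ K ∧ ub (g xb) = 0 ∧
      ∀ x ∈ X, f xb + ub (g xb) ≤ f x + ub (g x) := by
  obtain ⟨x₀, hx₀X, hx₀K, hx₀opt⟩ := hopt
  -- cone facts
  have hK0 : (0 : Z) ∈ K := by
    have := hKcone 0 le_rfl _ hx₀K
    simpa using this
  have hKadd : ∀ a ∈ K, ∀ b ∈ K, a + b ∈ K := by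
    intro a ha b hb
    have h := hKconv ha hb (by norm_num : (0:ℝ) ≤ 1/2) (by norm_num : (0:ℝ) ≤ 1/2)
      (by norm_num)
    have h2 := hKcone 2 (by norm_num) _ h
    have e : (2:ℝ) • ((1/2 : ℝ) • a + (1/2 : ℝ) • b) = a + b := by
      rw [smul_add, smul_smul, smul_smul]; norm_num
    rwa [e] at h2
  -- the optimal value equals c
  have hfx₀ : f x₀ = c := by
    have h1 : v 0 ≤ (f x₀ : EReal) := by
      rw [hv 0]
      exact sInf_le ⟨x₀, ⟨hx₀X, by simpa using hx₀K⟩, rfl⟩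
    have h2 : (f x₀ : EReal) ≤ v 0 := by
      rw [hv 0]
      apply le_sInf
      rintro y ⟨x, ⟨hxX, hxK⟩, rfl⟩
      exact EReal.coe_le_coe_iff.mpr (hx₀opt x hxX (by simpa using hxK))
    rw [hv0] at h1 h2
    have := le_antisymm h2 h1
    exact_mod_cast this
  -- lower bound on f coming from the rate condition
  have hlb : ∀ x ∈ X, ∀ k ∈ K, c - M * ‖g x + k‖ ≤ f x := by
    intro x hx k hk
    have h1 : v (g x + k) ≤ (f x : EReal) := by
      rw [hv]
      exact sInf_le ⟨x, ⟨hx, by simpa using hk⟩, rfl⟩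
    have h2 := hrate (g x + k)
    rw [hv0] at h2
    have h3 : (c : EReal) ≤ (f x : EReal) + ((M * ‖g x + k‖ : ℝ) : EReal) :=
      h2.trans (add_le_add_left h1 _)
    have h4 : (c : EReal) ≤ ((f x + M * ‖g x + k‖ : ℝ) : EReal) := by
      push_cast at h3 ⊢; exact h3
    have := EReal.coe_le_coe_iff.mp h4
    linarith
  -- the sublinear functional
  set S : Z → Set ℝ := fun z =>
    { r | ∃ t : ℝ, 0 < t ∧ ∃ x, x ∈ X ∧ ∃ k, k ∈ K ∧
        r = t * (f x - c) + M * ‖z - t • (g x + k)‖ } with hSdef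
  set p : Z → ℝ := fun z => sInf (S z) with hpdef
  have hSne : ∀ z, (M * ‖z‖) ∈ S z := by
    intro z
    refine ⟨1, one_pos, x₀, hx₀X, -g x₀, hx₀K, ?_⟩
    rw [hfx₀]
    simp
  have hSlb : ∀ z : Z, ∀ r ∈ S z, -(M * ‖z‖) ≤ r := by
    rintro z r ⟨t, ht, x, hx, k, hk, rfl⟩
    have h1 := hlb x hx k hk
    have h2 : t * ‖g x + k‖ ≤ ‖z‖ + ‖z - t • (g x + k)‖ := by
      have e : z - (z - t • (g x + k)) = t • (g x + k) := by abel
      have h := norm_sub_le z (z - t • (g x + k))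
      rw [e, norm_smul, Real.norm_of_nonneg ht.le] at h
      exact h
    have h3 := mul_le_mul_of_nonneg_left h1 ht.le
    have h4 := mul_le_mul_of_nonneg_left h2 hM.le
    nlinarith [norm_nonneg (z - t • (g x + k))]
  have hbdd : ∀ z, BddBelow (S z) := fun z => ⟨-(M * ‖z‖), fun r hr => hSlb z r hr⟩
  have hple : ∀ z, p z ≤ M * ‖z‖ := fun z => csInf_le (hbdd z) (hSne z)
  have hplb : ∀ z, -(M * ‖z‖) ≤ p z := fun z => le_csInf ⟨_, hSne z⟩ (hSlb z)
  have hpg : ∀ x ∈ X, p (g x) ≤ f x - c := by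
    intro x hx
    refine csInf_le (hbdd _) ⟨1, one_pos, x, hx, 0, hK0, ?_⟩
    simp
  have hpk : ∀ k ∈ K, p k ≤ 0 := by
    intro k hk
    refine csInf_le (hbdd _) ⟨1, one_pos, x₀, hx₀X, k + -g x₀, hKadd _ hk _ hx₀K, ?_⟩
    rw [hfx₀]
    have e : g x₀ + (k + -g x₀) = k := by abel
    rw [one_smul, e]
    simp
  -- positive homogeneity
  have hhom_le : ∀ a : ℝ, 0 < a → ∀ z, p (a • z) ≤ a * p z := by
    intro a ha z
    have h : p (a • z) / a ≤ p z := by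
      refine le_csInf ⟨_, hSne z⟩ ?_
      rintro r ⟨t, ht, x, hx, k, hk, rfl⟩
      have hmem : a * (t * (f x - c) + M * ‖z - t • (g x + k)‖) ∈ S (a • z) := by
        refine ⟨a * t, mul_pos ha ht, x, hx, k, hk, ?_⟩
        have e : a • z - (a * t) • (g x + k) = a • (z - t • (g x + k)) := by
          rw [smul_sub, mul_smul]
        rw [e, norm_smul, Real.norm_of_nonneg ha.le]
        ring
      have h5 := csInf_le (hbdd _) hmem
      rw [div_le_iff₀ ha]
      linarith [h5]
    rw [div_le_iff₀ ha] at h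
    linarith [h]
  have hhom : ∀ a : ℝ, 0 < a → ∀ z, p (a • z) = a * p z := by
    intro a ha z
    refine le_antisymm (hhom_le a ha z) ?_
    have h := hhom_le a⁻¹ (inv_pos.mpr ha) (a • z)
    rw [inv_smul_smul₀ ha.ne'] at h
    have h2 := mul_le_mul_of_nonneg_left h ha.le
    rw [← mul_assoc, mul_inv_cancel₀ ha.ne', one_mul] at h2
    exact h2
  -- subadditivity
  have hadd : ∀ z z', p (z + z') ≤ p z + p z' := by
    intro z z'
    have key : ∀ r ∈ S z, ∀ r' ∈ S z', p (z + z') ≤ r + r' := by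
      rintro r ⟨t, ht, x, hx, k, hk, rfl⟩ r' ⟨t', ht', x', hx', k', hk', rfl⟩
      set s := t + t' with hs
      have hs0 : 0 < s := by positivity
      have hts : s * (t / s) = t := by field_simp
      have hts' : s * (t' / s) = t' := by field_simp
      have hl : (0:ℝ) ≤ t / s := by positivity
      have hm : (0:ℝ) ≤ t' / s := by positivity
      have hlm : t / s + t' / s = 1 := by
        rw [← add_div]; exact div_self hs0.ne'
      have h1l : 1 - t / s = t' / s := by linarith
      set x'' := (t / s) • x + (t' / s) • x' with hx''def
      have hx'' : x'' ∈ X := hX hx hx' hl hm hlm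
      have hfc : f x'' ≤ (t / s) * f x + (t' / s) * f x' := by
        simpa using hf.2 hx hx' hl hm hlm
      have hk₀ := hg x hx x' hx' (t / s) ⟨hl, by linarith⟩
      rw [h1l] at hk₀
      set k'' := ((t / s) • g x + (t' / s) • g x' - g x'') +
        ((t / s) • k + (t' / s) • k') with hk''def
      have hk'' : k'' ∈ K :=
        hKadd _ hk₀ _ (hKadd _ (hKcone _ hl _ hk) _ (hKcone _ hm _ hk'))
      have halg : s • (g x'' + k'') = t • (g x + k) + t' • (g x' + k') := by
        have e1 : g x'' + k'' = (t / s) • (g x + k) + (t' / s) • (g x' + k') := by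
          rw [hk''def]
          module
        rw [e1, smul_add, smul_smul, smul_smul, hts, hts']
      have hmem : s * (f x'' - c) + M * ‖(z + z') - s • (g x'' + k'')‖ ∈ S (z + z') :=
        ⟨s, hs0, x'', hx'', k'', hk'', rfl⟩
      have h1 := csInf_le (hbdd _) hmem
      have hnorm : ‖(z + z') - s • (g x'' + k'')‖ ≤
          ‖z - t • (g x + k)‖ + ‖z' - t' • (g x' + k')‖ := by
        rw [halg]
        have e : (z + z') - (t • (g x + k) + t' • (g x' + k')) =
            (z - t • (g x + k)) + (z' - t' • (g x' + k')) := by abel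
        rw [e]
        exact norm_add_le _ _
      have hfin : s * (f x'' - c) ≤ t * (f x - c) + t' * (f x' - c) := by
        have ha1 : s * f x'' ≤ t * f x + t' * f x' := by
          calc s * f x'' ≤ s * ((t / s) * f x + (t' / s) * f x') :=
                mul_le_mul_of_nonneg_left hfc hs0.le
            _ = t * f x + t' * f x' := by field_simp
        have ha2 : s * c = t * c + t' * c := by rw [hs]; ring
        nlinarith [ha1, ha2]
      linarith [h1, hfin, mul_le_mul_of_nonneg_left hnorm hM.le]
    have step1 : ∀ r' ∈ S z', p (z + z') - r' ≤ p z := by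
      intro r' hr'
      refine le_csInf ⟨_, hSne z⟩ ?_
      intro r hr
      linarith [key r hr r' hr']
    have step2 : p (z + z') - p z ≤ p z' := by
      refine le_csInf ⟨_, hSne z'⟩ ?_
      intro r' hr'
      linarith [step1 r' hr']
    linarith
  -- Hahn–Banach
  obtain ⟨l, -, hl⟩ := exists_extension_of_le_sublinear ⟨⊥, 0⟩ p
    (fun a ha z => hhom a ha z) hadd
    (fun x => by
      obtain ⟨y, hy⟩ := x
      simp only [Submodule.mem_bot] at hy
      subst hy
      have h0 := hplb 0
      simp only [norm_zero, mul_zero, neg_zero] at h0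
      simpa using h0)
  have hbound : ∀ z, |l z| ≤ M * ‖z‖ := by
    intro z
    rw [abs_le]
    constructor
    · have h := (hl (-z)).trans (hple (-z))
      rw [map_neg, norm_neg] at h
      linarith
    · exact (hl z).trans (hple z)
  set L : Z →L[ℝ] ℝ := LinearMap.mkContinuous l M
    (fun z => by simpa [Real.norm_eq_abs] using hbound z) with hLdef
  have hLapp : ∀ z, L z = l z := fun z => rfl
  have eneg : ∀ y, (-L) y = -(l y) := fun y => by
    rw [ContinuousLinearMap.neg_apply, hLapp]
  have h2' : 0 ≤ l (g x₀) := by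
    have := (hl (-g x₀)).trans (hpk _ hx₀K)
    rw [map_neg] at this
    linarith
  have h3' : l (g x₀) ≤ 0 := by
    have := (hl (g x₀)).trans (hpg x₀ hx₀X)
    rw [hfx₀] at this
    linarith
  refine ⟨-L, ?_, x₀, hx₀X, hx₀K, ?_, ?_⟩
  · rw [hKplus]
    intro k hk
    have h := (hl k).trans (hpk k hk)
    rw [eneg]
    linarith
  · rw [eneg]
    linarith
  · intro x hx
    have h1 := (hl (g x)).trans (hpg x hx)
    rw [eneg, eneg]
    linarith [hfx₀, h1]
end
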